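/- arXiv:2309.01757 — 5 statements merged into one kernel-verified Lean document; each statement's English description precedes it below -/
import Mathlib

section
/- Let E be a local topos with global sections π_* and right adjoint π^! (the codiscrete functor). Call an object X of E concrete if the unit map X → π^! π_* X is a monomorphism. Then the full subcategory of concrete objects is reflective in E: the inclusion admits a left adjoint, given by taking the epi-mono (image) factorization X ↠ X' ↪ π^! π_* X of the unit. -/
/-!
For an adjunction `F ⊣ G` with unit `η`, concreteness (`η_X` mono) passes to subobjects, because
`i ≫ η_Y = η_X ≫ G (F i)`, and every `G Y` is concrete, since the triangle identity splits
`η_{G Y}`. Hence the image `X ↠ X'` of `η_X` is concrete. With finite limits its epi part is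
strong, so it is left orthogonal to the mono `η_Y` of a concrete `Y`: every `X ⟶ Y` factors
uniquely through `X'`, which is the universal property of the reflection.
-/

open CategoryTheory CategoryTheory.Limits

universe v u

namespace CategoryTheory.Adjunction

variable {C : Type u} {D : Type*} [Category.{v} C] [Category D] {F : C ⥤ D} {G : D ⥤ C}
  (adj : F ⊣ G)

def concrete : ObjectProperty C := fun X => Mono (adj.unit.app X)

instance : adj.concrete.IsClosedUnderSubobjects where
  prop_of_mono {X Y} i _ hY := by
    have : Mono (adj.unit.app Y) := hY
    have : Mono (adj.unit.app X ≫ G.map (F.map i)) := adj.unit_naturality i ▸ inferInstance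
    exact mono_of_mono _ (G.map (F.map i))

lemma concrete_obj (Y : D) : adj.concrete (G.obj Y) :=
  (SplitMono.mk (G.map (adj.counit.app Y)) (adj.right_triangle_components Y)).mono

lemma concrete_image_unit (X : C) [HasImage (adj.unit.app X)] :
    adj.concrete (image (adj.unit.app X)) :=
  adj.concrete.prop_of_mono (image.ι _) (adj.concrete_obj _)

lemma bijective_factorThruImage_unit_comp [HasImages C] [HasStrongEpiImages C] (X : C) {Y : C}
    (hY : adj.concrete Y) :
    Function.Bijective (fun g : image (adj.unit.app X) ⟶ Y => factorThruImage _ ≫ g) := by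
  have : Mono (adj.unit.app Y) := hY
  refine ⟨fun g₁ g₂ h => (cancel_epi _).1 h, fun f => ?_⟩
  have sq : CommSq f (factorThruImage (adj.unit.app X)) (adj.unit.app Y)
      (image.ι _ ≫ G.map (F.map f)) :=
    ⟨by rw [image.fac_assoc]; exact (adj.unit_naturality f).symm⟩
  exact ⟨sq.lift, sq.fac_left⟩

noncomputable def corepresentableByImageUnit [HasImages C] [HasStrongEpiImages C] (X : C) :
    (adj.concrete.ι ⋙ coyoneda.obj (Opposite.op X)).CorepresentableBy
      ⟨image (adj.unit.app X), adj.concrete_image_unit X⟩ where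
  homEquiv {Y} := (ObjectProperty.fullyFaithfulι _).homEquiv.trans
    (Equiv.ofBijective (factorThruImage (adj.unit.app X) ≫ ·)
      (adj.bijective_factorThruImage_unit_comp X Y.property))

theorem isRightAdjoint_concrete_ι [HasImages C] [HasStrongEpiImages C] :
    adj.concrete.ι.IsRightAdjoint := by
  rw [Functor.isRightAdjoint_iff_leftAdjointObjIsDefined_eq_top, eq_top_iff]
  exact fun X _ => (adj.corepresentableByImageUnit X).isCorepresentable

end CategoryTheory.Adjunction

theorem concrete_objects_reflective_general
    {E : Type u} [Category.{v} E] [HasTerminal E] [HasFiniteLimits E]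
    [HasImages E]
    (shriek : Type v ⥤ E)
    (adj : coyoneda.obj (Opposite.op (⊤_ E)) ⊣ shriek) :
    (ObjectProperty.ι (fun X : E => Mono (adj.unit.app X) : ObjectProperty E)).IsRightAdjoint :=
  adj.isRightAdjoint_concrete_ι

/-- Let `E` be a local topos, with global sections `Γ = Hom(1, -)`, codiscrete functor
`π^!` right adjoint to `Γ`, and constant object functor left adjoint to `Γ`.  Call an
object `X` concrete if the unit `X ⟶ π^! Γ X` is a monomorphism.  Then the full
subcategory of concrete objects is reflective: the inclusion admits a left adjoint
(given by the epi-mono factorization of the unit). -/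
theorem concrete_objects_reflective
    {E : Type u} [Category.{v} E] [HasTerminal E] [HasFiniteLimits E] [HasColimits E]
    [HasImages E]
    (const : Type v ⥤ E) (shriek : Type v ⥤ E)
    (adjConst : const ⊣ coyoneda.obj (Opposite.op (⊤_ E)))
    [PreservesFiniteLimits const]
    (adj : coyoneda.obj (Opposite.op (⊤_ E)) ⊣ shriek) :
    (ObjectProperty.ι (fun X : E => Mono (adj.unit.app X) : ObjectProperty E)).IsRightAdjoint :=
  concrete_objects_reflective_general shriek adj
end

section
/- Let E be a local topos. The full subcategory of concrete objects of E is closed under filtered colimits along diagrams in which all transition morphisms are monomorphisms; in particular such colimits computed in E are again concrete. -/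
/-!
Write `Γ = Hom(⊤_ E, -)` and `η` for the unit of `Γ ⊣ π^!`. Since `Γ` is a left adjoint,
`Γ (colim X)` is the filtered colimit of the sets `Γ (X i)` along injections, so every
`Γ (ι i)` is injective. By naturality, each leg `ι i ≫ η` of the cocone through `η` equals
`η (X i) ≫ π^! (Γ (ι i))`, a composite of monomorphisms. Hence `η` is the colimit of a
monomorphism of diagrams `X ⟶ const`, and filtered colimits preserve monomorphisms.
-/

open CategoryTheory CategoryTheory.Limits

universe w v u

namespace CategoryTheory.Limits

lemma IsColimit.mono_map_ι_app_of_isFiltered {C : Type u} [Category.{v} C]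
    {J : Type v} [SmallCategory J] [IsFiltered J] {X : J ⥤ C}
    [∀ (j j' : J) (φ : j ⟶ j'), Mono (X.map φ)] (G : C ⥤ Type v) [G.PreservesMonomorphisms]
    [PreservesColimit X G] {c : Cocone X} (hc : IsColimit c) (j : J) :
    Mono (G.map (c.ι.app j)) :=
  have (j j' : J) (φ : j ⟶ j') : Mono ((X ⋙ G).map φ) := G.map_mono (X.map φ)
  (isColimitOfPreserves G hc).mono_ι_app_of_isFiltered j

lemma IsColimit.mono_of_mono_ι_app_comp {C : Type u} [Category.{v} C]
    {J : Type w} [Category J] [IsConnected J] [HasColimitsOfShape J C]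
    [(colim : (J ⥤ C) ⥤ C).PreservesMonomorphisms] {X : J ⥤ C} {c : Cocone X}
    (hc : IsColimit c) {Y : C} (f : c.pt ⟶ Y) (hf : ∀ j, Mono (c.ι.app j ≫ f)) : Mono f :=
  have : ∀ j, Mono ((c.extend f).ι.app j) := hf
  have := NatTrans.mono_of_mono_app (c.extend f).ι
  colim.map_mono' (c.extend f).ι hc (isColimitConstCocone J Y) f
    (fun _ => (Category.comp_id _).symm)

end CategoryTheory.Limits

theorem concrete_closed_under_filtered_colimits_of_mono_general
    {E : Type u} [Category.{v} E] [HasTerminal E] [HasColimits E]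
    (shriek : Type v ⥤ E)
    (adj : coyoneda.obj (Opposite.op (⊤_ E)) ⊣ shriek)
    {I : Type v} [SmallCategory I] [IsFiltered I]
    [PreservesFiniteLimits (colim : (I ⥤ E) ⥤ E)]
    (X : I ⥤ E) (htrans : ∀ {i j : I} (φ : i ⟶ j), Mono (X.map φ))
    (hconc : ∀ i : I, Mono (adj.unit.app (X.obj i))) :
    Mono (adj.unit.app (colimit X)) := by
  have : ∀ (i j : I) (φ : i ⟶ j), Mono (X.map φ) := fun _ _ => htrans
  have := IsFiltered.isConnected I
  have := adj.leftAdjoint_preservesColimits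
  have := adj.isRightAdjoint
  refine (colimit.isColimit X).mono_of_mono_ι_app_comp _ fun i => ?_
  have : Mono ((coyoneda.obj (Opposite.op (⊤_ E))).map (colimit.ι X i)) :=
    (colimit.isColimit X).mono_map_ι_app_of_isFiltered _ i
  have := hconc i
  have hnat := adj.unit.naturality (colimit.ι X i)
  rw [Functor.id_map, Functor.comp_map] at hnat
  rw [colimit.cocone_ι, hnat]
  infer_instance

/-- Let `E` be a local topos (here: `Γ = Hom(1,-)` has a finite-limit-preserving left
adjoint and a right adjoint `π^!`; filtered colimits commute with finite limits, as in any
topos).  Then the concrete objects of `E` are closed under filtered colimits along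
diagrams all of whose transition morphisms are monomorphisms: such a colimit, computed in
`E`, is again concrete. -/
theorem concrete_closed_under_filtered_colimits_of_mono
    {E : Type u} [Category.{v} E] [HasTerminal E] [HasFiniteLimits E] [HasColimits E]
    (const : Type v ⥤ E) (shriek : Type v ⥤ E)
    (adjConst : const ⊣ coyoneda.obj (Opposite.op (⊤_ E)))
    [PreservesFiniteLimits const]
    (adj : coyoneda.obj (Opposite.op (⊤_ E)) ⊣ shriek)
    {I : Type v} [SmallCategory I] [IsFiltered I]
    [PreservesFiniteLimits (colim : (I ⥤ E) ⥤ E)]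
    (X : I ⥤ E) (htrans : ∀ {i j : I} (φ : i ⟶ j), Mono (X.map φ))
    (hconc : ∀ i : I, Mono (adj.unit.app (X.obj i))) :
    Mono (adj.unit.app (colimit X)) :=
  concrete_closed_under_filtered_colimits_of_mono_general shriek adj X htrans hconc
end

section
/- Let d, n be natural numbers with n > d, let U be an open neighbourhood of 0 in ℝⁿ, and let σ : U → [0,∞) be given by σ(x) = x₁² + ⋯ + xₙ². There do not exist C²-maps g : U → ℝᵈ with g(0) = 0 and f : ℝᵈ → [0,∞) with f ∘ g = σ on U. More precisely: if f ∘ g = σ with f, g twice continuously differentiable and g(0)=0, then since n > d the differential dg|₀ has nontrivial kernel; choosing a unit vector v in the kernel and setting h(t) = g(tv), one has (f∘h)''(0) = 0, contradicting (f∘h)(t) = t², whose second derivative is 2. -/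
/-!
Since `f ≥ 0` and `f 0 = 0`, the differential of `f` vanishes at `0`, so the `C²` map `f`
satisfies `f y = O(‖y‖²)`. As `n > d`, `dg₀` kills some `v ≠ 0`, so `g (t • v) = o(t)`.
Hence `t² ‖v‖² = f (g (t • v)) = o(t²)`, which is absurd.
-/

open scoped BigOperators

open Asymptotics Filter Metric Topology

section

variable {E F G : Type*} [NormedAddCommGroup E] [NormedSpace ℝ E]
  [NormedAddCommGroup F] [NormedSpace ℝ F] [NormedAddCommGroup G] [NormedSpace ℝ G]

theorem ContDiffAt.isBigO_sub_sq_of_fderiv_eq_zero {f : E → G} {x : E} (hf : ContDiffAt ℝ 2 f x)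
    (hx : fderiv ℝ f x = 0) : (fun y => f y - f x) =O[𝓝 x] fun y => ‖y - x‖ ^ 2 := by
  have hdiff : ∀ᶠ y in 𝓝 x, DifferentiableAt ℝ f y :=
    (hf.eventually (by simp)).mono fun y hy => hy.differentiableAt (by norm_num)
  obtain ⟨C, hC0, hC⟩ := ((hf.fderiv_right (m := 1) le_rfl).differentiableAt one_ne_zero
    ).hasFDerivAt.isBigO_sub.exists_nonneg
  obtain ⟨r, hr, hball⟩ := eventually_nhds_iff_ball.1 (hdiff.and hC.bound)
  refine IsBigO.of_bound C (eventually_nhds_iff_ball.2 ⟨r, hr, fun y hy => ?_⟩)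
  have hseg : segment ℝ x y ⊆ ball x r := (convex_ball x r).segment_subset (mem_ball_self hr) hy
  have hderiv : ∀ z ∈ segment ℝ x y, ‖fderiv ℝ f z‖ ≤ C * ‖y - x‖ := fun z hz => by
    have := (hball z (hseg hz)).2
    rw [hx, sub_zero] at this
    exact this.trans (mul_le_mul_of_nonneg_left (norm_sub_le_of_mem_segment hz) hC0)
  have := (convex_segment x y).norm_image_sub_le_of_norm_fderiv_le
    (fun z hz => (hball z (hseg hz)).1) hderiv (left_mem_segment ℝ x y) (right_mem_segment ℝ x y)
  simpa [sq, mul_assoc] using this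

theorem HasFDerivAt.isLittleO_comp_smul_of_apply_eq_zero {g : E → F} {D : E →L[ℝ] F} {v : E}
    (hg : HasFDerivAt g D 0) (hv : D v = 0) :
    (fun t : ℝ => g (t • v) - g 0) =o[𝓝 0] fun t => t := by
  have hline : HasDerivAt (fun t : ℝ => t • v) v 0 := by
    simpa using (hasDerivAt_id (0 : ℝ)).smul_const v
  have : HasDerivAt (fun t : ℝ => g (t • v)) 0 0 := by
    have hg' : HasFDerivAt g D ((0 : ℝ) • v) := by rwa [zero_smul]
    simpa [Function.comp_def, hv] using hg'.comp_hasDerivAt (0 : ℝ) hline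
  simpa using hasDerivAt_iff_isLittleO.1 this

theorem not_eventually_comp_eq_norm_sq {f : F → ℝ} {g : E → F} {D : E →L[ℝ] F} {v : E}
    (hf : f =O[𝓝 0] fun y => ‖y‖ ^ 2) (hg : HasFDerivAt g D 0) (hg0 : g 0 = 0) (hv : v ≠ 0)
    (hDv : D v = 0) : ¬∀ᶠ x in 𝓝 0, f (g x) = ‖x‖ ^ 2 := by
  intro hfg
  have hline : Tendsto (fun t : ℝ => t • v) (𝓝 0) (𝓝 0) := by
    simpa using (tendsto_id (x := 𝓝 (0 : ℝ))).smul_const v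
  have hcurve : Tendsto (fun t : ℝ => g (t • v)) (𝓝 0) (𝓝 0) :=
    hg0 ▸ hg.continuousAt.tendsto.comp hline
  have hsmall : (fun t : ℝ => f (g (t • v))) =o[𝓝 0] fun t => t ^ 2 := by
    have ho : (fun t : ℝ => g (t • v)) =o[𝓝 0] fun t => t := by
      simpa [hg0] using hg.isLittleO_comp_smul_of_apply_eq_zero hDv
    exact (hf.comp_tendsto hcurve).trans_isLittleO (ho.norm_left.pow two_pos)
  have hquad : (fun t : ℝ => f (g (t • v))) =ᶠ[𝓝 0] fun t => ‖v‖ ^ 2 * t ^ 2 :=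
    (hline.eventually hfg).mono fun t ht => by
      simp only [ht, norm_smul, mul_pow, Real.norm_eq_abs, sq_abs, mul_comm]
  have : (fun t : ℝ => ‖v‖ ^ 2 * t ^ 2) =o[𝓝[≠] 0] fun t => t ^ 2 :=
    (hsmall.congr' hquad EventuallyEq.rfl).mono nhdsWithin_le_nhds
  rw [isLittleO_const_mul_left_iff (by positivity)] at this
  have hne : ∀ᶠ t : ℝ in 𝓝[≠] 0, t ^ 2 ≠ 0 :=
    eventually_nhdsWithin_of_forall fun t ht => pow_ne_zero 2 ht
  exact isLittleO_irrefl hne.frequently this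

end

/-- Let `n > d`, let `U` be an open neighbourhood of `0` in `ℝⁿ`, and let
`σ : U → [0,∞)` be `σ x = x₁² + ⋯ + xₙ²`.  There are no `C²`-maps `g : U → ℝᵈ` with
`g 0 = 0` and `f : ℝᵈ → [0,∞)` with `f ∘ g = σ` on `U`. -/
theorem no_C2_factorization_of_sum_of_squares (d n : ℕ) (hdn : d < n)
    (U : Set (EuclideanSpace ℝ (Fin n))) (hU : IsOpen U) (h0U : 0 ∈ U)
    (g : EuclideanSpace ℝ (Fin n) → EuclideanSpace ℝ (Fin d))
    (f : EuclideanSpace ℝ (Fin d) → ℝ)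
    (hg : ContDiffOn ℝ 2 g U) (hf : ContDiff ℝ 2 f)
    (hg0 : g 0 = 0) (hfnonneg : ∀ y, 0 ≤ f y)
    (hfact : ∀ x ∈ U, f (g x) = ∑ i, (x i) ^ 2) : False := by
  have hf0 : f 0 = 0 := by simpa [hg0] using hfact 0 h0U
  have hDf : fderiv ℝ f 0 = 0 :=
    IsLocalMin.fderiv_eq_zero (Eventually.of_forall fun y => hf0 ▸ hfnonneg y)
  have hf_sq : f =O[𝓝 0] fun y => ‖y‖ ^ 2 := by
    simpa [hf0] using hf.contDiffAt.isBigO_sub_sq_of_fderiv_eq_zero hDf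
  have hgD : HasFDerivAt g (fderiv ℝ g 0) 0 :=
    ((hg.contDiffAt (hU.mem_nhds h0U)).differentiableAt (by norm_num)).hasFDerivAt
  obtain ⟨v, hv_ker, hv_ne⟩ := Submodule.ne_bot_iff _ |>.1 <|
    (fderiv ℝ g 0).toLinearMap.ker_ne_bot_of_finrank_lt (by simpa using hdn)
  refine not_eventually_comp_eq_norm_sq hf_sq hgD hg0 hv_ne hv_ker ?_
  filter_upwards [hU.mem_nhds h0U] with x hx
  rw [hfact x hx, EuclideanSpace.real_norm_sq_eq]
end

section
/- Let I be a set, and for each i ∈ I let A_i be a (small) filtered category and X_i : A_i → Set a functor. Then the canonical map colim over (α_i) ∈ ∏_{i∈I} A_i of ∏_{i∈I} X_i(α_i) → ∏_{i∈I} colim_{α_i ∈ A_i} X_i(α_i) is a bijection. -/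
/-!
An element of `∏ᵢ colim Xᵢ` is hit by choosing a representative in each coordinate. Two elements
of the product-indexed colimit that become equal in every `colim Xᵢ` are, by filteredness of each
`Aᵢ`, identified along cospans `αᵢ ⟶ γᵢ ⟵ βᵢ`; these assemble into one cospan `α ⟶ γ ⟵ β` in
`∏ᵢ Aᵢ`, which already identifies them in the colimit over `∏ᵢ Aᵢ`.
-/

open CategoryTheory CategoryTheory.Limits

universe u

variable {I : Type u} {A : I → Type u} [∀ i, SmallCategory (A i)]

/-- The diagram `(αᵢ)ᵢ ↦ ∏ᵢ Xᵢ(αᵢ)` indexed by the product category `∏ᵢ Aᵢ`. -/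
def prodDiagram (X : ∀ i, A i ⥤ Type u) : (∀ i, A i) ⥤ Type u where
  obj α := ∀ i, (X i).obj (α i)
  map φ := TypeCat.ofHom fun x i => (X i).map (φ i) (x i)
  map_id := by
    intro α
    ext x
    simp [CategoryTheory.Pi.id_apply]
  map_comp := by
    intro α β γ φ ψ
    ext x
    simp [CategoryTheory.Pi.comp_apply]

/-- The canonical cocone on `prodDiagram X` with apex `∏ᵢ colim Xᵢ`. -/
noncomputable def canonicalCocone (X : ∀ i, A i ⥤ Type u) : Cocone (prodDiagram X) where
  pt := ∀ i, colimit (X i)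
  ι :=
    { app := fun α => TypeCat.ofHom fun x i => colimit.ι (X i) (α i) (x i)
      naturality := by
        intro α β φ
        ext x
        funext i
        exact congrArg (fun f => f (x i)) (colimit.w (X i) (φ i)) }

/-- The canonical comparison map
`colim_{(αᵢ) ∈ ∏ᵢ Aᵢ} ∏ᵢ Xᵢ(αᵢ) ⟶ ∏ᵢ colim_{αᵢ ∈ Aᵢ} Xᵢ(αᵢ)`. -/
noncomputable def canonicalMap (X : ∀ i, A i ⥤ Type u) :
    colimit (prodDiagram X) → ∀ i, colimit (X i) :=
  colimit.desc (prodDiagram X) (canonicalCocone X)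

theorem canonicalMap_ι_apply (X : ∀ i, A i ⥤ Type u) (α : ∀ i, A i)
    (x : (prodDiagram X).obj α) :
    canonicalMap X (colimit.ι (prodDiagram X) α x) = fun i => colimit.ι (X i) (α i) (x i) :=
  congrArg (fun f => f x) (colimit.ι_desc (canonicalCocone X) α)

theorem canonicalMap_surjective (X : ∀ i, A i ⥤ Type u) :
    Function.Surjective (canonicalMap X) := by
  intro z
  choose α x hx using fun i => Types.jointly_surjective' (z i)
  exact ⟨colimit.ι (prodDiagram X) α x, (canonicalMap_ι_apply X α x).trans (funext hx)⟩

theorem canonicalMap_injective [∀ i, IsFiltered (A i)] (X : ∀ i, A i ⥤ Type u) :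
    Function.Injective (canonicalMap X) := by
  intro u v huv
  obtain ⟨α, x, rfl⟩ := Types.jointly_surjective' u
  obtain ⟨β, y, rfl⟩ := Types.jointly_surjective' v
  rw [canonicalMap_ι_apply, canonicalMap_ι_apply] at huv
  choose γ f g hfg using fun i =>
    (Types.FilteredColimit.colimit_eq_iff (X i)).mp (congrFun huv i)
  exact Types.colimit_sound' f g (funext hfg)

/-- Products commute with filtered colimits in `Set`: for a family of filtered categories
`Aᵢ` and functors `Xᵢ : Aᵢ ⥤ Type`, the canonical map
`colim_{(αᵢ) ∈ ∏ᵢ Aᵢ} ∏ᵢ Xᵢ(αᵢ) → ∏ᵢ colim_{αᵢ} Xᵢ(αᵢ)` is a bijection. -/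
theorem canonicalMap_bijective [∀ i, IsFiltered (A i)] (X : ∀ i, A i ⥤ Type u) :
    Function.Bijective (canonicalMap X) :=
  ⟨canonicalMap_injective X, canonicalMap_surjective X⟩
end

section
/- Let G be a group object in a category C with finite products, acting on an object P over B (i.e. an action a : P × G → P over B for a morphism p : P → B). Suppose the shearing map (pr₁, a) : P × G → P ×_B P is an isomorphism and p is an effective epimorphism. Then the Čech nerve of p is isomorphic, as a simplicial object, to the bar construction: P ×_B P ×_B ⋯ ×_B P (n+1 factors) ≅ P × G^n, compatibly with all face and degeneracy maps. -/
/-!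
The shearing isomorphism says that any two points `x, y` of a fibre of `p` differ by a unique
`g` with `x • g = y`. Hence a point `(v₀, …, vₙ)` of the `(n+1)`-fold fibre product is the same
as its first point `v₀` together with the `n` unique steps `gₖ` with `vₖ • gₖ = vₖ₊₁`, and the
comparison map recovers `vₖ` as `v₀ • (g₀ ⋯ gₖ₋₁)`. The steps of the bar construction's structure
map are quotients of such partial products, so their partial products telescope, which gives
compatibility with the simplicial structure.
-/

universe u

variable {P B G : Type u} [Group G]

/-- The product `g₀ * g₁ * ⋯ * g_{k-1}` of the first `k` entries of `g : Fin n → G`. -/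
def prodUpTo {n : ℕ} (g : Fin n → G) (k : ℕ) : G :=
  ((List.ofFn g).take k).prod

/-- The comparison map from the `n`-th level `P × Gⁿ` of the bar construction of a right
action `ρ` to sequences of `n + 1` points of `P`:
`(x; g₁, …, gₙ) ↦ (x, x·g₁, x·g₁g₂, …, x·g₁⋯gₙ)`. -/
def cechBarMap (ρ : P → G → P) {n : ℕ} (xg : P × (Fin n → G)) : Fin (n + 1) → P :=
  fun i => ρ xg.1 (prodUpTo xg.2 i.val)

/-- The simplicial structure map of the bar construction of a right action `ρ`, for a
monotone map `φ : [m] → [n]`: it acts on `P × Gⁿ` by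
`(x; g₁, …, gₙ) ↦ (x·(g₁⋯g_{φ 0}); h₁, …, h_m)` where `h_j = g_{φ(j-1)+1} ⋯ g_{φ j}`. -/
def barMap (ρ : P → G → P) {m n : ℕ} (φ : Fin (m + 1) →o Fin (n + 1)) :
    P × (Fin n → G) → P × (Fin m → G) :=
  fun xg =>
    (ρ xg.1 (prodUpTo xg.2 (φ 0).val),
      fun j => (prodUpTo xg.2 (φ j.castSucc).val)⁻¹ * prodUpTo xg.2 (φ j.succ).val)

@[simp]
theorem prodUpTo_zero {n : ℕ} (g : Fin n → G) : prodUpTo g 0 = 1 := by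
  simp [prodUpTo]

theorem prodUpTo_succ {n : ℕ} (g : Fin n → G) (k : Fin n) :
    prodUpTo g (k + 1) = prodUpTo g k * g k := by
  simp [prodUpTo, List.prod_take_succ _ _ (by simp : (k : ℕ) < (List.ofFn g).length)]

theorem prodUpTo_telescope {m : ℕ} (f : Fin (m + 1) → G) (k : Fin (m + 1)) :
    prodUpTo (fun j : Fin m => (f j.castSucc)⁻¹ * f j.succ) k = (f 0)⁻¹ * f k := by
  induction k using Fin.induction with
  | zero => simp
  | succ k ih =>
    rw [Fin.val_succ, prodUpTo_succ, ← Fin.val_castSucc, ih, mul_assoc, mul_inv_cancel_left]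

section RightAction

variable (ρ : P → G → P)

theorem cechBarMap_zero (hρ_one : ∀ x, ρ x 1 = x) {n : ℕ} (xg : P × (Fin n → G)) :
    cechBarMap ρ xg 0 = xg.1 := by
  simp [cechBarMap, hρ_one]

theorem cechBarMap_succ (hρ_mul : ∀ x g h, ρ x (g * h) = ρ (ρ x g) h) {n : ℕ}
    (xg : P × (Fin n → G)) (k : Fin n) :
    cechBarMap ρ xg k.succ = ρ (cechBarMap ρ xg k.castSucc) (xg.2 k) := by
  simp only [cechBarMap, Fin.val_succ, prodUpTo_succ, hρ_mul, Fin.val_castSucc]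

theorem cechBarMap_eq_iff (hρ_one : ∀ x, ρ x 1 = x)
    (hρ_mul : ∀ x g h, ρ x (g * h) = ρ (ρ x g) h) {n : ℕ}
    (xg : P × (Fin n → G)) (v : Fin (n + 1) → P) :
    cechBarMap ρ xg = v ↔ xg.1 = v 0 ∧ ∀ k, ρ (v k.castSucc) (xg.2 k) = v k.succ := by
  constructor
  · rintro rfl
    exact ⟨(cechBarMap_zero ρ hρ_one xg).symm, fun k => (cechBarMap_succ ρ hρ_mul xg k).symm⟩
  · rintro ⟨h_start, h_steps⟩
    funext i
    induction i using Fin.induction with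
    | zero => rw [cechBarMap_zero ρ hρ_one, h_start]
    | succ k ih => rw [cechBarMap_succ ρ hρ_mul, ih, h_steps]

theorem cechBarMap_barMap (hρ_mul : ∀ x g h, ρ x (g * h) = ρ (ρ x g) h) {m n : ℕ}
    (φ : Fin (m + 1) →o Fin (n + 1)) (xg : P × (Fin n → G)) (j : Fin (m + 1)) :
    cechBarMap ρ (barMap ρ φ xg) j = cechBarMap ρ xg (φ j) := by
  simp only [cechBarMap, barMap, ← hρ_mul, prodUpTo_telescope (fun i => prodUpTo xg.2 (φ i)),
    mul_inv_cancel_left]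

end RightAction

theorem cechNerve_iso_bar_construction_general (p : P → B) (ρ : P → G → P)
    (hρ_one : ∀ x, ρ x 1 = x)
    (hρ_mul : ∀ x g h, ρ x (g * h) = ρ (ρ x g) h)
    (hover : ∀ x g, p (ρ x g) = p x)
    (hshear : ∀ x y : P, p x = p y → ∃! g : G, ρ x g = y) :
    -- each level of the bar construction maps into the Čech nerve of `p` …
    (∀ (n : ℕ) (xg : P × (Fin n → G)) (i j : Fin (n + 1)),
      p (cechBarMap ρ xg i) = p (cechBarMap ρ xg j)) ∧
    -- … bijectively …
    (∀ n : ℕ, Function.Injective (cechBarMap ρ (n := n))) ∧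
    (∀ (n : ℕ) (v : Fin (n + 1) → P), (∀ i j, p (v i) = p (v j)) →
      ∃ xg : P × (Fin n → G), cechBarMap ρ xg = v) ∧
    -- … and compatibly with all simplicial structure maps (faces and degeneracies):
    (∀ (m n : ℕ) (φ : Fin (m + 1) →o Fin (n + 1)) (xg : P × (Fin n → G)) (j : Fin (m + 1)),
      cechBarMap ρ (barMap ρ φ xg) j = cechBarMap ρ xg (φ j)) := by
  refine ⟨fun n xg i j => by simp [cechBarMap, hover], ?_, ?_,
    fun m n φ => cechBarMap_barMap ρ hρ_mul φ⟩
  · intro n xg yg h_eq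
    obtain ⟨hx, hg⟩ := (cechBarMap_eq_iff ρ hρ_one hρ_mul xg _).1 h_eq
    obtain ⟨hy, hh⟩ := (cechBarMap_eq_iff ρ hρ_one hρ_mul yg _).1 rfl
    refine Prod.ext (hx.trans hy.symm) (funext fun k => ?_)
    have h_fibre : p (cechBarMap ρ yg k.castSucc) = p (cechBarMap ρ yg k.succ) := by
      rw [← hh k, hover]
    exact (hshear _ _ h_fibre).unique (hg k) (hh k)
  · intro n v hv
    choose g hg _ using fun k : Fin n => hshear (v k.castSucc) (v k.succ) (hv _ _)
    exact ⟨(v 0, g), (cechBarMap_eq_iff ρ hρ_one hρ_mul _ v).2 ⟨rfl, hg⟩⟩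

/-- Let `G` be a group acting on the right (via `ρ`) on `P` over `p : P → B`.  If the
shearing map `P × G → P ×_B P` is an isomorphism (equivalently, the action is free and
transitive on each fiber) and `p` is an effective epimorphism (surjective), then the Čech
nerve of `p` is isomorphic, as a simplicial object, to the bar construction: in each
degree `n` the map `P × Gⁿ → P ×_B ⋯ ×_B P` is a bijection onto the `(n+1)`-fold fiber
product, compatibly with all the simplicial structure maps (in particular with all face
and degeneracy maps). -/
theorem cechNerve_iso_bar_construction (p : P → B) (ρ : P → G → P)
    (hρ_one : ∀ x, ρ x 1 = x)
    (hρ_mul : ∀ x g h, ρ x (g * h) = ρ (ρ x g) h)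
    (hover : ∀ x g, p (ρ x g) = p x)
    (hshear : ∀ x y : P, p x = p y → ∃! g : G, ρ x g = y)
    (hsurj : Function.Surjective p) :
    -- each level of the bar construction maps into the Čech nerve of `p` …
    (∀ (n : ℕ) (xg : P × (Fin n → G)) (i j : Fin (n + 1)),
      p (cechBarMap ρ xg i) = p (cechBarMap ρ xg j)) ∧
    -- … bijectively …
    (∀ n : ℕ, Function.Injective (cechBarMap ρ (n := n))) ∧
    (∀ (n : ℕ) (v : Fin (n + 1) → P), (∀ i j, p (v i) = p (v j)) →
      ∃ xg : P × (Fin n → G), cechBarMap ρ xg = v) ∧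
    -- … and compatibly with all simplicial structure maps (faces and degeneracies):
    (∀ (m n : ℕ) (φ : Fin (m + 1) →o Fin (n + 1)) (xg : P × (Fin n → G)) (j : Fin (m + 1)),
      cechBarMap ρ (barMap ρ φ xg) j = cechBarMap ρ xg (φ j)) :=
  cechNerve_iso_bar_construction_general p ρ hρ_one hρ_mul hover hshear
end
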